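/- Fix q ∈ (0,1), ε ∈ (0,1), integers γ ≥ 1 and k_max ≥ 1, and a probability vector π̃ = (π̃_1,…,π̃_{k_max}), and let b_θ = 1 + q(e^θ − 1). Then for every integer t ≥ k_max, the non-asymptotic capacity bounds sandwich the asymptotic capacity 1 − q: λ_t^L ≤ 1 − q ≤ λ_t^U, where λ_t^L = sup_{θ>0} { 1 − (log b_{γθ})/(γθ) + (log ε)/(tθ) − c_K(t)/(tθ) } with c_K(t) = Σ_{k=1}^{k_max} π̃_k · log( binomial(t+k−1, k−1) ), and λ_t^U = inf_{θ>0} { 1 + (log b_{−γθ})/(γθ) − (log ε)/(tθ) }. (In particular, for every θ > 0 one has log b_{θ} ≥ qθ and log b_{−θ} ≥ −qθ.) -/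

import Mathlib

/-! Everything reduces to Jensen's inequality for `exp`: `exp (qθ) ≤ (1 - q) e⁰ + q e^θ = b_θ`,
i.e. `log b_θ ≥ qθ` for every real `θ`. Hence each candidate value of `λ_t^L` is at most
`1 - q`, because `log ε ≤ 0` and `c_K(t) ≥ 0` only lower it further, and symmetrically
(with `-θ`) each candidate value of `λ_t^U` is at least `1 - q`. -/

open Real

lemma mul_le_log_one_add_mul_exp_sub_one {q : ℝ} (hq0 : 0 ≤ q) (hq1 : q ≤ 1) (θ : ℝ) :
    q * θ ≤ log (1 + q * (exp θ - 1)) := by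
  have jensen := convexOn_exp.2 (Set.mem_univ θ) (Set.mem_univ 0) hq0 (sub_nonneg.2 hq1)
    (add_sub_cancel q 1)
  simp only [smul_eq_mul, mul_zero, add_zero, exp_zero, mul_one] at jensen
  rw [← log_exp (q * θ)]
  exact log_le_log (exp_pos _) (by linarith)

lemma le_log_one_add_mul_exp_sub_one_div {q s : ℝ} (hq0 : 0 ≤ q) (hq1 : q ≤ 1) (hs : 0 < s) :
    q ≤ log (1 + q * (exp s - 1)) / s :=
  (le_div_iff₀ hs).2 (mul_le_log_one_add_mul_exp_sub_one hq0 hq1 s)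

lemma neg_le_log_one_add_mul_exp_neg_sub_one_div {q s : ℝ} (hq0 : 0 ≤ q) (hq1 : q ≤ 1)
    (hs : 0 < s) : -q ≤ log (1 + q * (exp (-s) - 1)) / s := by
  rw [le_div_iff₀ hs]
  linarith [mul_le_log_one_add_mul_exp_sub_one hq0 hq1 (-s)]

theorem stmt9_general (q ε : ℝ) (hq : q ∈ Set.Ioo (0 : ℝ) 1) (hε : ε ∈ Set.Ioo (0 : ℝ) 1)
    (γ kmax : ℕ) (hγ : 1 ≤ γ)
    (π' : ℕ → ℝ) (hπ'0 : ∀ k ∈ Finset.Icc 1 kmax, 0 ≤ π' k) :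
    (∀ t : ℕ, kmax ≤ t →
      sSup {x : ℝ | ∃ θ : ℝ, 0 < θ ∧
          x = 1 - Real.log (1 + q * (Real.exp ((γ : ℝ) * θ) - 1)) / ((γ : ℝ) * θ)
              + Real.log ε / ((t : ℝ) * θ)
              - (∑ k ∈ Finset.Icc 1 kmax,
                  π' k * Real.log ((Nat.choose (t + k - 1) (k - 1) : ℝ)))
                / ((t : ℝ) * θ)} ≤ 1 - q ∧
      1 - q ≤ sInf {x : ℝ | ∃ θ : ℝ, 0 < θ ∧
          x = 1 + Real.log (1 + q * (Real.exp (-((γ : ℝ) * θ)) - 1)) / ((γ : ℝ) * θ)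
              - Real.log ε / ((t : ℝ) * θ)}) ∧
    ∀ θ : ℝ, 0 < θ →
      q * θ ≤ Real.log (1 + q * (Real.exp θ - 1)) ∧
      -(q * θ) ≤ Real.log (1 + q * (Real.exp (-θ) - 1)) := by
  obtain ⟨hq0, hq1⟩ := hq
  have hγ0 : (0 : ℝ) < γ := Nat.cast_pos.2 hγ
  have hlogε : log ε ≤ 0 := log_nonpos hε.1.le hε.2.le
  refine ⟨fun t _ => ⟨?_, ?_⟩, fun θ _ => ?_⟩
  · refine Real.sSup_le ?_ (by linarith)
    rintro _ ⟨θ, hθ, rfl⟩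
    have hb := le_log_one_add_mul_exp_sub_one_div hq0.le hq1.le (mul_pos hγ0 hθ)
    have hε_term : log ε / (t * θ) ≤ 0 := div_nonpos_of_nonpos_of_nonneg hlogε (by positivity)
    have hc_term : 0 ≤ (∑ k ∈ Finset.Icc 1 kmax,
        π' k * log ((Nat.choose (t + k - 1) (k - 1) : ℝ))) / (t * θ) :=
      div_nonneg (Finset.sum_nonneg fun k hk => mul_nonneg (hπ'0 k hk) (log_natCast_nonneg _))
        (by positivity)
    linarith
  · refine le_csInf ⟨_, 1, one_pos, rfl⟩ ?_
    rintro _ ⟨θ, hθ, rfl⟩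
    have hb := neg_le_log_one_add_mul_exp_neg_sub_one_div hq0.le hq1.le (mul_pos hγ0 hθ)
    have hε_term : log ε / (t * θ) ≤ 0 := div_nonpos_of_nonpos_of_nonneg hlogε (by positivity)
    linarith
  · exact ⟨mul_le_log_one_add_mul_exp_sub_one hq0.le hq1.le θ,
      by linarith [mul_le_log_one_add_mul_exp_sub_one hq0.le hq1.le (-θ)]⟩

/-- with `b_θ = 1 + q(e^θ − 1)` and
`c_K(t) = ∑_{k=1}^{k_max} π̃_k log C(t+k−1, k−1)`, for every integer `t ≥ k_max`
the non-asymptotic capacity bounds sandwich the asymptotic capacity `1 − q`: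
`λ_t^L ≤ 1 − q ≤ λ_t^U`.  In particular, for every `θ > 0`,
`log b_θ ≥ qθ` and `log b_{−θ} ≥ −qθ`. -/
theorem stmt9 (q ε : ℝ) (hq : q ∈ Set.Ioo (0 : ℝ) 1) (hε : ε ∈ Set.Ioo (0 : ℝ) 1)
    (γ kmax : ℕ) (hγ : 1 ≤ γ) (hkmax : 1 ≤ kmax)
    (π' : ℕ → ℝ) (hπ'0 : ∀ k ∈ Finset.Icc 1 kmax, 0 ≤ π' k)
    (hπ'1 : ∑ k ∈ Finset.Icc 1 kmax, π' k = 1) :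
    (∀ t : ℕ, kmax ≤ t →
      sSup {x : ℝ | ∃ θ : ℝ, 0 < θ ∧
          x = 1 - Real.log (1 + q * (Real.exp ((γ : ℝ) * θ) - 1)) / ((γ : ℝ) * θ)
              + Real.log ε / ((t : ℝ) * θ)
              - (∑ k ∈ Finset.Icc 1 kmax,
                  π' k * Real.log ((Nat.choose (t + k - 1) (k - 1) : ℝ)))
                / ((t : ℝ) * θ)} ≤ 1 - q ∧
      1 - q ≤ sInf {x : ℝ | ∃ θ : ℝ, 0 < θ ∧
          x = 1 + Real.log (1 + q * (Real.exp (-((γ : ℝ) * θ)) - 1)) / ((γ : ℝ) * θ)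
              - Real.log ε / ((t : ℝ) * θ)}) ∧
    ∀ θ : ℝ, 0 < θ →
      q * θ ≤ Real.log (1 + q * (Real.exp θ - 1)) ∧
      -(q * θ) ≤ Real.log (1 + q * (Real.exp (-θ) - 1)) :=
  stmt9_general q ε hq hε γ kmax hγ π' hπ'0
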